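/- Along solutions of the shifted secondary-control system η̇ = Bᵀ(ω − 𝟙ω*), J ω̇ = [ω]⁻¹(Q⁻¹(ξ − ξ̄) − BΓ(sin η − sin η̄)) − D(ω − 𝟙ω*), ξ̇ = −𝓛(ξ − ξ̄) − Q⁻¹[ω]⁻¹(ω − 𝟙ω*), the time derivative of W_s(η, ω, ξ) = W(x) − (x − x̄)ᵀ∇W(x̄) − W(x̄), where W(x) = ½ωᵀJω − (ω*)⁻¹𝟙ᵀΓ cos η + ½ξᵀξ and x̄ = (η̄, 𝟙ω*, ξ̄), equals Ẇ_s = −(ξ − ξ̄)ᵀ𝓛(ξ − ξ̄) − (ω − 𝟙ω*)ᵀ(D − (ω*)⁻¹[ω]⁻¹[z(η)])(ω − 𝟙ω*), with z(η) = BΓ(sin η − sin η̄). -/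

import Mathlib

/-! For a separable energy `W x = ∑ₐ φₐ (xₐ)` the Bregman shift `W_s` at `x̄` has time derivative
`∑ₐ (φₐ'(xₐ) - φₐ'(x̄ₐ)) ẋₐ`. For the secondary-control energy the `η`-block of this sum equals
`(ω*)⁻¹ (ω - 𝟙ω*)ᵀ z(η)` because `uᵀ Bᵀ v = vᵀ B u`, the `q⁻¹`-couplings between the `ω`- and
`ξ`-blocks cancel, and what is left of `z` combines with the `η`-block through
`(ω*)⁻¹ - ωᵢ⁻¹ = (ω*)⁻¹ ωᵢ⁻¹ (ωᵢ - ω*)`. -/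

open Finset

noncomputable def bregmanShift {ι : Type*} [Fintype ι] [DecidableEq ι]
    (W : (ι → ℝ) → ℝ) (xbar x : ι → ℝ) : ℝ :=
  W x - ∑ a, (x a - xbar a) * fderiv ℝ W xbar (Pi.single a 1) - W xbar

section Separable

variable {ι : Type*} [Fintype ι] (φ φ' : ι → ℝ → ℝ)

theorem hasFDerivAt_sum_comp_apply (y : ι → ℝ)
    (hφ : ∀ a, HasDerivAt (φ a) (φ' a (y a)) (y a)) :
    HasFDerivAt (fun x : ι → ℝ => ∑ a, φ a (x a))
      (∑ a, φ' a (y a) • ContinuousLinearMap.proj (R := ℝ) (φ := fun _ : ι => ℝ) a) y :=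
  HasFDerivAt.fun_sum fun a _ => (hφ a).comp_hasFDerivAt y
    (ContinuousLinearMap.proj (R := ℝ) (φ := fun _ : ι => ℝ) a).hasFDerivAt

theorem fderiv_sum_comp_apply_single [DecidableEq ι] (y : ι → ℝ)
    (hφ : ∀ a, HasDerivAt (φ a) (φ' a (y a)) (y a)) (a : ι) :
    fderiv ℝ (fun x : ι → ℝ => ∑ a, φ a (x a)) y (Pi.single a 1) = φ' a (y a) := by
  rw [(hasFDerivAt_sum_comp_apply φ φ' y hφ).fderiv]
  simp [Pi.single_apply]

theorem hasDerivAt_bregmanShift_sum_comp_apply [DecidableEq ι]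
    (hφ : ∀ a u, HasDerivAt (φ a) (φ' a u) u) (xbar : ι → ℝ) {x : ℝ → ι → ℝ} {x' : ι → ℝ}
    {t : ℝ} (hx : ∀ a, HasDerivAt (fun s => x s a) (x' a) t) :
    HasDerivAt (fun s => bregmanShift (fun y : ι → ℝ => ∑ a, φ a (y a)) xbar (x s))
      (∑ a, (φ' a (x t a) - φ' a (xbar a)) * x' a) t := by
  simp only [bregmanShift, fderiv_sum_comp_apply_single φ φ' xbar (fun a => hφ a _)]
  have hW := HasDerivAt.fun_sum (u := univ) fun a _ => (hφ a (x t a)).comp t (hx a)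
  have hlin := HasDerivAt.fun_sum (u := univ) fun a _ =>
    ((hx a).sub_const (xbar a)).mul_const (φ' a (xbar a))
  refine ((hW.sub hlin).sub_const _).congr_deriv ?_
  rw [← sum_sub_distrib]
  exact sum_congr rfl fun a _ => by ring

end Separable

section StorageFunction

variable {ι κ : Type*} (ωstar : ℝ) (Jm : κ → ℝ) (γ : ι → ℝ)

noncomputable def storageDensity : ι ⊕ κ ⊕ κ → ℝ → ℝ :=
  Sum.elim (fun k u => -(ωstar⁻¹ * (γ k * Real.cos u)))
    (Sum.elim (fun i u => 1 / 2 * (Jm i * u ^ 2)) (fun _ u => 1 / 2 * u ^ 2))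

noncomputable def storageDensityDeriv : ι ⊕ κ ⊕ κ → ℝ → ℝ :=
  Sum.elim (fun k u => ωstar⁻¹ * (γ k * Real.sin u)) (Sum.elim (fun i u => Jm i * u) (fun _ u => u))

theorem hasDerivAt_storageDensity (a : ι ⊕ κ ⊕ κ) (u : ℝ) :
    HasDerivAt (storageDensity ωstar Jm γ a) (storageDensityDeriv ωstar Jm γ a u) u := by
  rcases a with k | i | i
  · simpa [storageDensity, storageDensityDeriv] using
      (((Real.hasDerivAt_cos u).const_mul (γ k)).const_mul ωstar⁻¹).fun_neg
  · exact (((hasDerivAt_pow 2 u).const_mul (Jm i)).const_mul (1 / 2 : ℝ)).congr_deriv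
      (by simp only [storageDensityDeriv, Sum.elim_inr, Sum.elim_inl]; push_cast; ring)
  · exact ((hasDerivAt_pow 2 u).const_mul (1 / 2 : ℝ)).congr_deriv
      (by simp only [storageDensityDeriv, Sum.elim_inr]; push_cast; ring)

theorem sum_storageDensity [Fintype ι] [Fintype κ] (x : ι ⊕ κ ⊕ κ → ℝ) :
    ∑ a, storageDensity ωstar Jm γ a (x a) =
      1 / 2 * ∑ i, Jm i * x (Sum.inr (Sum.inl i)) ^ 2
        - ωstar⁻¹ * ∑ k, γ k * Real.cos (x (Sum.inl k))
        + 1 / 2 * ∑ i, x (Sum.inr (Sum.inr i)) ^ 2 := by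
  simp only [storageDensity, Fintype.sum_sum_type, Sum.elim_inl, Sum.elim_inr, mul_sum,
    sum_neg_distrib]
  ring

end StorageFunction

theorem sum_mul_transpose_mulVec {m n : Type*} [Fintype m] [Fintype n]
    (B : Matrix n m ℝ) (u : m → ℝ) (v : n → ℝ) :
    ∑ k, u k * (B.transpose.mulVec v) k = ∑ i, v i * (B.mulVec u) i := by
  change u ⬝ᵥ B.transpose.mulVec v = v ⬝ᵥ B.mulVec u
  rw [Matrix.dotProduct_mulVec, Matrix.vecMul_transpose, dotProduct_comm]

theorem bus_storage_rate {J D q ω ωstar ξ ξbar z r : ℝ}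
    (hJ : J ≠ 0) (hω : ω ≠ 0) (hωstar : ωstar ≠ 0) :
    (ω - ωstar) * (ωstar⁻¹ * z)
        + ((J * ω - J * ωstar) * (((q⁻¹ * (ξ - ξbar) - z) / ω - D * (ω - ωstar)) / J)
          + (ξ - ξbar) * (-r - q⁻¹ * (ω - ωstar) / ω))
      = -((ξ - ξbar) * r) - (ω - ωstar) * ((D - ωstar⁻¹ * ω⁻¹ * z) * (ω - ωstar)) := by
  field_simp
  ring

theorem stmt13_general {n m : ℕ}
    (B : Matrix (Fin n) (Fin m) ℝ)
    (L : Matrix (Fin n) (Fin n) ℝ)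
    (Jm Dm q : Fin n → ℝ) (γ : Fin m → ℝ)
    (hJ : ∀ i, 0 < Jm i)
    (ωstar : ℝ) (hωstar : 0 < ωstar)
    (ηbar : Fin m → ℝ) (ξbar : Fin n → ℝ)
    (W : ((Fin m ⊕ Fin n ⊕ Fin n) → ℝ) → ℝ)
    (hW : ∀ x, W x = (1 / 2) * ∑ i, Jm i * (x (Sum.inr (Sum.inl i))) ^ 2
        - ωstar⁻¹ * ∑ k, γ k * Real.cos (x (Sum.inl k))
        + (1 / 2) * ∑ i, (x (Sum.inr (Sum.inr i))) ^ 2)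
    (xbar : (Fin m ⊕ Fin n ⊕ Fin n) → ℝ)
    (hxbar : xbar = Sum.elim ηbar (Sum.elim (fun _ => ωstar) ξbar))
    (Ws : ((Fin m ⊕ Fin n ⊕ Fin n) → ℝ) → ℝ)
    (hWs : ∀ x, Ws x =
      W x - (∑ a, (x a - xbar a) * fderiv ℝ W xbar (Pi.single a 1)) - W xbar)
    (ηf : ℝ → Fin m → ℝ) (ωf ξf : ℝ → Fin n → ℝ) (t : ℝ)
    (hωpos : ∀ i, 0 < ωf t i)
    (z : Fin n → ℝ)
    (hz : z = B.mulVec fun k => γ k * (Real.sin (ηf t k) - Real.sin (ηbar k)))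
    (hη : ∀ k, HasDerivAt (fun s => ηf s k)
        ((B.transpose.mulVec fun i => ωf t i - ωstar) k) t)
    (hω : ∀ i, HasDerivAt (fun s => ωf s i)
        ((((q i)⁻¹ * (ξf t i - ξbar i) - z i) / ωf t i
          - Dm i * (ωf t i - ωstar)) / Jm i) t)
    (hξ : ∀ i, HasDerivAt (fun s => ξf s i)
        (-(L.mulVec fun j => ξf t j - ξbar j) i
          - (q i)⁻¹ * (ωf t i - ωstar) / ωf t i) t) :
    HasDerivAt (fun s => Ws (Sum.elim (ηf s) (Sum.elim (ωf s) (ξf s))))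
      (-(∑ i, (ξf t i - ξbar i) * (L.mulVec fun j => ξf t j - ξbar j) i)
        - ∑ i, (ωf t i - ωstar) *
            ((Dm i - ωstar⁻¹ * (ωf t i)⁻¹ * z i) * (ωf t i - ωstar))) t := by
  have hx : ∀ a, HasDerivAt (fun s => Sum.elim (ηf s) (Sum.elim (ωf s) (ξf s)) a)
      (Sum.elim (fun k => (B.transpose.mulVec fun i => ωf t i - ωstar) k)
        (Sum.elim (fun i => (((q i)⁻¹ * (ξf t i - ξbar i) - z i) / ωf t i
          - Dm i * (ωf t i - ωstar)) / Jm i)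
          (fun i => -(L.mulVec fun j => ξf t j - ξbar j) i
            - (q i)⁻¹ * (ωf t i - ωstar) / ωf t i)) a) t := by
    rintro (k | i | i)
    exacts [hη k, hω i, hξ i]
  have hcoupling :
      ∑ k, (ωstar⁻¹ * (γ k * Real.sin (ηf t k)) - ωstar⁻¹ * (γ k * Real.sin (ηbar k)))
        * (B.transpose.mulVec fun i => ωf t i - ωstar) k
      = ∑ i, (ωf t i - ωstar) * (ωstar⁻¹ * z i) := by
    calc _ = ωstar⁻¹ * ∑ k, γ k * (Real.sin (ηf t k) - Real.sin (ηbar k))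
          * (B.transpose.mulVec fun i => ωf t i - ωstar) k := by
          rw [mul_sum]; exact sum_congr rfl fun k _ => by ring
      _ = ωstar⁻¹ * ∑ i, (ωf t i - ωstar) * z i := by
          rw [sum_mul_transpose_mulVec B fun k => γ k * (Real.sin (ηf t k) - Real.sin (ηbar k)),
            hz]
      _ = _ := by rw [mul_sum]; exact sum_congr rfl fun i _ => by ring
  obtain rfl : W = fun y => ∑ a, storageDensity ωstar Jm γ a (y a) :=
    funext fun y => (hW y).trans (sum_storageDensity ωstar Jm γ y).symm
  obtain rfl : Ws = bregmanShift _ xbar := funext hWs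
  subst hxbar
  refine (hasDerivAt_bregmanShift_sum_comp_apply _ _ (hasDerivAt_storageDensity ωstar Jm γ) _
    hx).congr_deriv ?_
  simp only [Fintype.sum_sum_type, Sum.elim_inl, Sum.elim_inr, storageDensityDeriv, hcoupling,
    ← sum_neg_distrib, ← sum_add_distrib, ← sum_sub_distrib]
  exact sum_congr rfl fun i _ => bus_storage_rate (hJ i).ne' (hωpos i).ne' hωstar.ne'

/-- Dissipation identity for the secondary-control closed loop: along solutions
of the shifted system, d/dt W_s = −(ξ − ξ̄)ᵀ𝓛(ξ − ξ̄)
− (ω − 𝟙ω*)ᵀ(D − (ω*)⁻¹[ω]⁻¹[z(η)])(ω − 𝟙ω*), with z(η) = BΓ(sin η − sin η̄),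
where W_s is the Bregman shift of W(x) = ½ωᵀJω − (ω*)⁻¹𝟙ᵀΓ cos η + ½ξᵀξ at
x̄ = (η̄, 𝟙ω*, ξ̄). The state is encoded as x : (Fin m ⊕ Fin n ⊕ Fin n) → ℝ with
η = x ∘ inl, ω = x ∘ inr ∘ inl, ξ = x ∘ inr ∘ inr. -/
theorem stmt13 {n m : ℕ}
    (B : Matrix (Fin n) (Fin m) ℝ)
    (L : Matrix (Fin n) (Fin n) ℝ) (hLsym : L.IsSymm) (hLpsd : L.PosSemidef)
    (Jm Dm q : Fin n → ℝ) (γ : Fin m → ℝ)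
    (hJ : ∀ i, 0 < Jm i) (hD : ∀ i, 0 < Dm i) (hq : ∀ i, 0 < q i) (hγ : ∀ k, 0 < γ k)
    (ωstar : ℝ) (hωstar : 0 < ωstar)
    (ηbar : Fin m → ℝ) (ξbar : Fin n → ℝ)
    (W : ((Fin m ⊕ Fin n ⊕ Fin n) → ℝ) → ℝ)
    (hW : ∀ x, W x = (1 / 2) * ∑ i, Jm i * (x (Sum.inr (Sum.inl i))) ^ 2
        - ωstar⁻¹ * ∑ k, γ k * Real.cos (x (Sum.inl k))
        + (1 / 2) * ∑ i, (x (Sum.inr (Sum.inr i))) ^ 2)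
    (xbar : (Fin m ⊕ Fin n ⊕ Fin n) → ℝ)
    (hxbar : xbar = Sum.elim ηbar (Sum.elim (fun _ => ωstar) ξbar))
    (Ws : ((Fin m ⊕ Fin n ⊕ Fin n) → ℝ) → ℝ)
    (hWs : ∀ x, Ws x =
      W x - (∑ a, (x a - xbar a) * fderiv ℝ W xbar (Pi.single a 1)) - W xbar)
    (ηf : ℝ → Fin m → ℝ) (ωf ξf : ℝ → Fin n → ℝ) (t : ℝ)
    (hωpos : ∀ i, 0 < ωf t i)
    (z : Fin n → ℝ)
    (hz : z = B.mulVec fun k => γ k * (Real.sin (ηf t k) - Real.sin (ηbar k)))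
    (hη : ∀ k, HasDerivAt (fun s => ηf s k)
        ((B.transpose.mulVec fun i => ωf t i - ωstar) k) t)
    (hω : ∀ i, HasDerivAt (fun s => ωf s i)
        ((((q i)⁻¹ * (ξf t i - ξbar i) - z i) / ωf t i
          - Dm i * (ωf t i - ωstar)) / Jm i) t)
    (hξ : ∀ i, HasDerivAt (fun s => ξf s i)
        (-(L.mulVec fun j => ξf t j - ξbar j) i
          - (q i)⁻¹ * (ωf t i - ωstar) / ωf t i) t) :
    HasDerivAt (fun s => Ws (Sum.elim (ηf s) (Sum.elim (ωf s) (ξf s))))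
      (-(∑ i, (ξf t i - ξbar i) * (L.mulVec fun j => ξf t j - ξbar j) i)
        - ∑ i, (ωf t i - ωstar) *
            ((Dm i - ωstar⁻¹ * (ωf t i)⁻¹ * z i) * (ωf t i - ωstar))) t :=
  stmt13_general B L Jm Dm q γ hJ ωstar hωstar ηbar ξbar W hW xbar hxbar Ws hWs ηf ωf ξf t hωpos z
    hz hη hω hξ
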